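/- arXiv:1403.7420 — 7 statements merged into one kernel-verified Lean document; each statement's English description precedes it below -/
import Mathlib

section
/- Suppose 0 < α < γ. Then the infimum I_n of the discrete energy E_n over (ℝ^d)^n is strictly negative: there exists a configuration of n collinear equally spaced points with spacing 1/n whose energy E_n is negative. -/
/-! Every pair of distinct points of the configuration lies at a distance `r ∈ (0, 1)`, and there
`r ^ γ < r ^ α` together with `1 / γ < 1 / α` makes `w r = r ^ γ / γ - r ^ α / α` negative; so every
off-diagonal term of `E_n` is negative, and there is at least one since `n ≥ 2`. -/

open Finset

noncomputable def En (d n : ℕ) (α γ : ℝ) (x : Fin n → EuclideanSpace ℝ (Fin d)) : ℝ :=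
  ∑ i, ∑ j, if i = j then 0 else ‖x i - x j‖ ^ γ / γ - ‖x i - x j‖ ^ α / α

lemma rpow_div_sub_rpow_div_neg {α γ r : ℝ} (hα : 0 < α) (h : α < γ) (hr₀ : 0 < r) (hr₁ : r < 1) :
    r ^ γ / γ - r ^ α / α < 0 := by
  have hγα : r ^ γ < r ^ α := Real.rpow_lt_rpow_of_exponent_gt hr₀ hr₁ h
  have : r ^ γ / γ ≤ r ^ γ / α := by gcongr
  have : r ^ γ / α < r ^ α / α := by gcongr
  linarith

lemma sum_sum_ite_eq_zero_neg {ι M : Type*} [Fintype ι] [DecidableEq ι] [Nontrivial ι]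
    [AddCommMonoid M] [PartialOrder M] [IsOrderedCancelAddMonoid M] {f : ι → ι → M}
    (hf : ∀ i j, i ≠ j → f i j < 0) : ∑ i, ∑ j, (if i = j then 0 else f i j) < 0 := by
  refine sum_neg (fun i _ => ?_) univ_nonempty
  obtain ⟨j, hji⟩ := exists_ne i
  refine sum_neg' (fun k _ => ?_) ⟨j, mem_univ j, by simpa [hji.symm] using hf i j hji.symm⟩
  split_ifs with hik
  · exact le_rfl
  · exact (hf i k hik).le

lemma En_neg_of_injective_of_norm_sub_lt_one {d n : ℕ} {α γ : ℝ} (hn : 2 ≤ n) (hα : 0 < α)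
    (h : α < γ) {x : Fin n → EuclideanSpace ℝ (Fin d)} (hx : Function.Injective x)
    (hx₁ : ∀ i j, ‖x i - x j‖ < 1) : En d n α γ x < 0 := by
  have : Nontrivial (Fin n) := Fin.nontrivial_iff_two_le.mpr hn
  refine sum_sum_ite_eq_zero_neg fun i j hij => rpow_div_sub_rpow_div_neg hα h ?_ (hx₁ i j)
  exact norm_pos_iff.mpr (sub_ne_zero.mpr (hx.ne hij))

section EquallySpaced

variable {E : Type*} [NormedAddCommGroup E] [NormedSpace ℝ E] {n : ℕ} {v : E}

lemma injective_div_smul (hn : n ≠ 0) (hv : v ≠ 0) :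
    Function.Injective fun i : Fin n => ((i : ℝ) / n) • v := by
  refine (smul_left_injective ℝ hv).comp fun i j hij => ?_
  have hn' : (n : ℝ) ≠ 0 := Nat.cast_ne_zero.mpr hn
  exact Fin.ext (by exact_mod_cast (div_left_inj' hn').mp hij)

lemma norm_div_smul_sub_div_smul_lt_one (hv : ‖v‖ = 1) (i j : Fin n) :
    ‖((i : ℝ) / n) • v - ((j : ℝ) / n) • v‖ < 1 := by
  have hn : (0 : ℝ) < n := by exact_mod_cast i.pos
  rw [← sub_smul, norm_smul, hv, mul_one, ← sub_div, Real.norm_eq_abs, abs_div,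
    abs_of_pos hn, div_lt_one hn, abs_sub_lt_iff]
  have hi : (i : ℝ) < n := by exact_mod_cast i.isLt
  have hj : (j : ℝ) < n := by exact_mod_cast j.isLt
  constructor <;> linarith [(i : ℕ).cast_nonneg (α := ℝ), (j : ℕ).cast_nonneg (α := ℝ)]

end EquallySpaced

theorem stmt_2 (d n : ℕ) (hd : 1 ≤ d) (hn : 2 ≤ n) (α γ : ℝ) (hα : 0 < α) (h : α < γ) :
    ∃ v : EuclideanSpace ℝ (Fin d), ‖v‖ = 1 ∧
      En d n α γ (fun i => ((i : ℝ) / n) • v) < 0 := by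
  set v : EuclideanSpace ℝ (Fin d) := EuclideanSpace.single ⟨0, hd⟩ 1
  have hv : ‖v‖ = 1 := by simp [v]
  refine ⟨v, hv, En_neg_of_injective_of_norm_sub_lt_one hn hα h ?_
    (norm_div_smul_sub_div_smul_lt_one hv)⟩
  exact injective_div_smul (by omega) (norm_ne_zero_iff.mp (hv ▸ one_ne_zero))
end

section
/- Suppose 0 < α < γ. If x = (x_1,…,x_n) ∈ (ℝ^d)^n satisfies E_n(x) < 0, then the diameter R = max_{i,j} |x_i − x_j| satisfies R ≤ (n²γ/α)^{1/(γ−α)}. -/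
open Finset

/-!
Every pair interaction `w(r) = r^γ/γ - r^α/α` is at least `w(1) ≥ -1/α` (weighted AM-GM), so
if the energy is negative, the single term of the pair `(i, j)` is less than `(n² - 1)/α`.
On the other hand `w(r) = r^α (r^(γ-α)/γ - 1/α)`, and once `r^(γ-α) > n²γ/α` this exceeds
`(n² - 1)/α`.
-/

theorem Fintype.single_le_sum_add_of_forall_neg_le {ι R : Type*} [Fintype ι]
    [CommRing R] [PartialOrder R] [IsOrderedRing R] {f : ι → R} {c : R}
    (hf : ∀ k, -c ≤ f k) (a : ι) : f a ≤ ∑ k, f k + (Fintype.card ι - 1) * c := by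
  have h := Finset.single_le_sum (f := fun k => f k + c)
    (fun k _ => neg_le_iff_add_nonneg.1 (hf k)) (Finset.mem_univ a)
  rw [Finset.sum_add_distrib, Finset.sum_const, Finset.card_univ, nsmul_eq_mul] at h
  linear_combination h

noncomputable def pairPotential (α γ r : ℝ) : ℝ := r ^ γ / γ - r ^ α / α

section pairPotential

variable {α γ r : ℝ}

theorem one_div_sub_one_div_le_pairPotential (hα : 0 < α) (h : α < γ) (hr : 0 ≤ r) :
    1 / γ - 1 / α ≤ pairPotential α γ r := by
  have hγ : 0 < γ := hα.trans h
  have hw : 0 ≤ 1 - α / γ := by rw [sub_nonneg, div_le_one hγ]; exact h.le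
  have amgm : (r ^ γ) ^ (α / γ) * 1 ^ (1 - α / γ) ≤ α / γ * r ^ γ + (1 - α / γ) * 1 :=
    Real.geom_mean_le_arith_mean2_weighted (by positivity) hw (by positivity) zero_le_one
      (by ring)
  rw [Real.one_rpow, mul_one, ← Real.rpow_mul hr, mul_div_cancel₀ _ hγ.ne'] at amgm
  rw [pairPotential, ← sub_nonneg]
  have key : 0 ≤ (α / γ * r ^ γ + (1 - α / γ) * 1 - r ^ α) / α := by
    have := sub_nonneg.2 amgm
    positivity
  convert key using 1
  field_simp
  ring

theorem le_of_pairPotential_lt {K : ℝ} (hα : 0 < α) (h : α < γ) (hr : 0 ≤ r) (hK : 1 ≤ K)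
    (hw : pairPotential α γ r < (K - 1) / α) : r ≤ (K * γ / α) ^ (1 / (γ - α)) := by
  have hγ : 0 < γ := hα.trans h
  have hγα : 0 < γ - α := sub_pos.2 h
  suffices hpow : r ^ (γ - α) ≤ K * γ / α by
    calc r = (r ^ (γ - α)) ^ (1 / (γ - α)) := by
          rw [← Real.rpow_mul hr, mul_one_div_cancel hγα.ne', Real.rpow_one]
      _ ≤ (K * γ / α) ^ (1 / (γ - α)) := by gcongr
  by_contra! hlt
  have hK' : 1 ≤ K * γ / α := by
    rw [le_div_iff₀ hα, one_mul]; nlinarith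
  have hr1 : 1 ≤ r := by
    by_contra! hr1
    have : r ^ (γ - α) ≤ 1 := Real.rpow_le_one hr hr1.le hγα.le
    linarith
  have hbracket : (K - 1) / α < r ^ (γ - α) / γ - 1 / α := by
    rw [lt_sub_iff_add_lt, ← add_div, sub_add_cancel, div_lt_div_iff₀ hα hγ]
    rw [div_lt_iff₀ hα] at hlt
    linarith
  have hsplit : pairPotential α γ r = r ^ α * (r ^ (γ - α) / γ - 1 / α) := by
    rw [pairPotential, mul_sub, mul_div_assoc', ← Real.rpow_add (by linarith), add_sub_cancel]
    ring
  have hKα : 0 ≤ (K - 1) / α := div_nonneg (by linarith) hα.le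
  have : r ^ (γ - α) / γ - 1 / α ≤ pairPotential α γ r := by
    rw [hsplit]
    exact le_mul_of_one_le_left (by linarith) (Real.one_le_rpow hr1 hα.le)
  linarith

end pairPotential

theorem stmt_3 (d n : ℕ) (α γ : ℝ) (hα : 0 < α) (h : α < γ)
    (x : Fin n → EuclideanSpace ℝ (Fin d)) (hx : En d n α γ x < 0) :
    ∀ i j, ‖x i - x j‖ ≤ ((n : ℝ) ^ 2 * γ / α) ^ (1 / (γ - α)) := by
  intro i j
  have hγ : 0 < γ := hα.trans h
  by_cases hij : i = j
  · rw [hij, sub_self, norm_zero]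
    positivity
  let w : Fin n × Fin n → ℝ := fun p =>
    if p.1 = p.2 then 0 else pairPotential α γ ‖x p.1 - x p.2‖
  have hw : ∀ p, -(1 / α) ≤ w p := fun p => by
    have := one_div_sub_one_div_le_pairPotential hα h (norm_nonneg (x p.1 - x p.2))
    have : 0 < 1 / γ := one_div_pos.2 hγ
    unfold w; split_ifs <;> linarith [one_div_pos.2 hα]
  have hE : ∑ p, w p = En d n α γ x := Fintype.sum_prod_type w
  have hcard : (Fintype.card (Fin n × Fin n) : ℝ) = (n : ℝ) ^ 2 := by simp [sq]
  have hwij := Fintype.single_le_sum_add_of_forall_neg_le hw (i, j)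
  rw [hE, hcard, mul_one_div] at hwij
  have hpair : w (i, j) = pairPotential α γ ‖x i - x j‖ := if_neg hij
  refine le_of_pairPotential_lt hα h (norm_nonneg _) (one_le_pow₀ (by exact_mod_cast i.pos)) ?_
  linarith
end

section
/- Suppose α < γ < 0. Then for every n ≥ 2, the infimum of E_n over configurations of pairwise distinct points in ℝ^d is negative and is attained by some configuration contained (up to translation) in the cube [0, n−1]^d. -/
/-!
The potential `w` is negative and increasing on `[1, ∞)`, has its minimum `w 1 < 0` at `1`, and
tends to `+∞` at `0`. So below some `δ` it exceeds `-n² w 1`, and a configuration with a pair closer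
than `δ` has positive energy, since each of the other terms is at least `w 1`; unit-spaced points on
a line have negative energy. In each coordinate, sending `t` to the length of `⋃ j, [v j, v j + 1]`
left of `t` shrinks every gap between consecutive values that exceeds `1` to `1` and keeps the
others. Every distance is then either kept or at least `1` and not larger, which does not increase
the energy, and the configuration lands in `[0, n - 1]^d`. A minimiser over the compact set of
`δ`-separated configurations in the cube is therefore a global one.
-/

open Finset

open Set Filter MeasureTheory Topology

-- The paper's `w`, the summand of `En`.
noncomputable def potential (α γ r : ℝ) : ℝ := r ^ γ / γ - r ^ α / α

section Potential
variable {α γ : ℝ}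

lemma hasDerivAt_potential (hα : α ≠ 0) (hγ : γ ≠ 0) {r : ℝ} (hr : 0 < r) :
    HasDerivAt (potential α γ) (r ^ (γ - 1) - r ^ (α - 1)) r := by
  have hγ' := (Real.hasDerivAt_rpow_const (p := γ) (Or.inl hr.ne')).div_const γ
  have hα' := (Real.hasDerivAt_rpow_const (p := α) (Or.inl hr.ne')).div_const α
  rw [mul_div_cancel_left₀ _ hγ] at hγ'
  rw [mul_div_cancel_left₀ _ hα] at hα'
  exact hγ'.sub hα'

lemma continuousOn_potential : ContinuousOn (potential α γ) (Ioi 0) := fun r hr =>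
  (((Real.continuousAt_rpow_const r γ (Or.inl (ne_of_gt hr))).div_const γ).sub
    ((Real.continuousAt_rpow_const r α (Or.inl (ne_of_gt hr))).div_const α)).continuousWithinAt

variable (hα : α ≠ 0) (hγ : γ ≠ 0) (hαγ : α ≤ γ)
include hα hγ hαγ

lemma monotoneOn_potential : MonotoneOn (potential α γ) (Ici 1) := by
  refine monotoneOn_of_hasDerivWithinAt_nonneg (convex_Ici 1)
    (continuousOn_potential.mono fun r (hr : 1 ≤ r) => zero_lt_one.trans_le hr)
    (fun r hr => (hasDerivAt_potential hα hγ (by simp_all; linarith)).hasDerivWithinAt) ?_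
  intro r hr
  rw [interior_Ici, Set.mem_Ioi] at hr
  exact sub_nonneg.2 (Real.rpow_le_rpow_of_exponent_le hr.le (by linarith))

lemma antitoneOn_potential : AntitoneOn (potential α γ) (Ioc 0 1) := by
  refine antitoneOn_of_hasDerivWithinAt_nonpos (convex_Ioc 0 1)
    (continuousOn_potential.mono Ioc_subset_Ioi_self)
    (fun r hr => (hasDerivAt_potential hα hγ (by simp_all)).hasDerivWithinAt) ?_
  intro r hr
  rw [interior_Ioc, Set.mem_Ioo] at hr
  exact sub_nonpos.2 (Real.rpow_le_rpow_of_exponent_ge hr.1 hr.2.le (by linarith))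

lemma potential_one_le {r : ℝ} (hr : 0 < r) : potential α γ 1 ≤ potential α γ r := by
  rcases le_total r 1 with hr1 | hr1
  · exact antitoneOn_potential hα hγ hαγ ⟨hr, hr1⟩ ⟨one_pos, le_rfl⟩ hr1
  · exact monotoneOn_potential hα hγ hαγ Set.self_mem_Ici hr1 hr1

end Potential

section Potential
variable {α γ : ℝ} (hαγ : α < γ) (hγ : γ < 0)
include hαγ hγ

lemma potential_neg {r : ℝ} (hr : 1 ≤ r) : potential α γ r < 0 := by
  have hα : α < 0 := hαγ.trans hγ
  have hrα : 0 < r ^ α := Real.rpow_pos_of_pos (zero_lt_one.trans_le hr) α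
  calc potential α γ r ≤ r ^ α / γ - r ^ α / α := by
        rw [potential, sub_le_sub_iff_right]
        exact div_le_div_of_nonpos_of_le hγ.le (Real.rpow_le_rpow_of_exponent_le hr hαγ.le)
    _ = r ^ α * (1 / γ - 1 / α) := by ring
    _ < 0 := mul_neg_of_pos_of_neg hrα (sub_neg.2 (one_div_lt_one_div_of_neg_of_lt hγ hαγ))

lemma tendsto_potential_nhdsGT_zero : Tendsto (potential α γ) (𝓝[>] 0) atTop := by
  have hα : α < 0 := hαγ.trans hγ
  have hfactor : Tendsto (fun r : ℝ => r ^ (γ - α) / γ - 1 / α) (𝓝[>] 0) (𝓝 (-1 / α)) := by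
    have := ((Real.continuousAt_rpow_const 0 (γ - α) (Or.inr (by linarith))).div_const
      γ).sub_const (1 / α)
    simp only [Real.zero_rpow (by linarith : γ - α ≠ 0), zero_div, zero_sub] at this
    rw [neg_div]
    exact tendsto_nhdsWithin_of_tendsto_nhds this
  refine ((tendsto_rpow_neg_nhdsGT_zero hα).atTop_mul_pos (by simpa [neg_div] using hα)
    hfactor).congr' ?_
  filter_upwards [self_mem_nhdsWithin] with r (hr : 0 < r)
  rw [potential, mul_sub, ← mul_div_assoc, ← Real.rpow_add hr, add_sub_cancel, mul_one_div]

lemma exists_le_potential (M : ℝ) :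
    ∃ δ, 0 < δ ∧ δ ≤ 1 ∧ ∀ r, 0 < r → r ≤ δ → M ≤ potential α γ r := by
  obtain ⟨u, hu, hsub⟩ := mem_nhdsGT_iff_exists_Ioc_subset.1
    ((tendsto_potential_nhdsGT_zero hαγ hγ).eventually (eventually_ge_atTop M))
  exact ⟨min u 1, lt_min hu one_pos, min_le_right _ _,
    fun r hr hrδ => hsub ⟨hr, hrδ.trans (min_le_left _ _)⟩⟩

end Potential

section CoveredLength
variable {ι : Type*} [Fintype ι] (v : ι → ℝ)

def unitCover : Set ℝ := ⋃ j, Icc (v j) (v j + 1)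

noncomputable def coveredLength (t : ℝ) : ℝ := volume.real (unitCover v ∩ Iic t)

lemma volume_unitCover_inter_ne_top (s : Set ℝ) : volume (unitCover v ∩ s) ≠ ⊤ :=
  ((isCompact_iUnion fun _ => isCompact_Icc).measure_lt_top.trans_le'
    (measure_mono inter_subset_left)).ne

lemma coveredLength_sub {a b : ℝ} (hab : a ≤ b) :
    coveredLength v b - coveredLength v a = volume.real (unitCover v ∩ Ioc a b) := by
  have hsplit : unitCover v ∩ Iic b = (unitCover v ∩ Iic a) ∪ (unitCover v ∩ Ioc a b) := by
    rw [← inter_union_distrib_left, Iic_union_Ioc_eq_Iic hab]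
  have hdisj : Disjoint (unitCover v ∩ Iic a) (unitCover v ∩ Ioc a b) :=
    (Set.Iic_disjoint_Ioc le_rfl).mono inter_subset_right inter_subset_right
  rw [coveredLength, coveredLength, hsplit, measureReal_union hdisj
    ((MeasurableSet.iUnion fun _ => measurableSet_Icc).inter measurableSet_Ioc)
    (volume_unitCover_inter_ne_top v _) (volume_unitCover_inter_ne_top v _)]
  ring

lemma monotone_coveredLength : Monotone (coveredLength v) := fun _ _ hab =>
  measureReal_mono (inter_subset_inter_right _ (Iic_subset_Iic.2 hab))
    (volume_unitCover_inter_ne_top v _)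

lemma coveredLength_sub_le {a b : ℝ} (hab : a ≤ b) :
    coveredLength v b - coveredLength v a ≤ b - a := by
  rw [coveredLength_sub v hab, ← Real.volume_real_Ioc_of_le hab]
  exact measureReal_mono inter_subset_right measure_Ioc_lt_top.ne

lemma min_sub_le_coveredLength_sub (i : ι) {b : ℝ} (hb : v i ≤ b) :
    min (b - v i) 1 ≤ coveredLength v b - coveredLength v (v i) := by
  have hsub : Ioc (v i) (min b (v i + 1)) ⊆ unitCover v ∩ Ioc (v i) b := fun x hx =>
    ⟨mem_iUnion.2 ⟨i, hx.1.le, hx.2.trans (min_le_right _ _)⟩, hx.1,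
      hx.2.trans (min_le_left _ _)⟩
  calc min (b - v i) 1 = volume.real (Ioc (v i) (min b (v i + 1))) := by
        rw [Real.volume_real_Ioc_of_le (le_min hb (by linarith)), ← min_sub_sub_right,
          add_sub_cancel_left]
    _ ≤ coveredLength v b - coveredLength v (v i) := by
        rw [coveredLength_sub v hb]
        exact measureReal_mono hsub (volume_unitCover_inter_ne_top v _)

lemma coveredLength_le_card_sub_one (i : ι) :
    coveredLength v (v i) ≤ Fintype.card ι - 1 := by
  classical
  have hsub : unitCover v ∩ Iic (v i) ⊆ {v i} ∪ ⋃ j ∈ univ.erase i, Icc (v j) (v j + 1) := by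
    rintro x ⟨hx, hxi⟩
    obtain ⟨j, hj⟩ := mem_iUnion.1 hx
    by_cases hji : j = i
    · subst hji
      exact Or.inl (le_antisymm hxi hj.1)
    · exact Or.inr (mem_biUnion (mem_erase.2 ⟨hji, mem_univ j⟩) hj)
  calc coveredLength v (v i)
      ≤ volume.real ({v i} ∪ ⋃ j ∈ univ.erase i, Icc (v j) (v j + 1)) :=
        measureReal_mono hsub <| (isCompact_singleton.union <|
          (univ.erase i).finite_toSet.isCompact_biUnion fun _ _ => isCompact_Icc).measure_lt_top.ne
    _ ≤ volume.real {v i} + ∑ j ∈ univ.erase i, volume.real (Icc (v j) (v j + 1)) :=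
        (measureReal_union_le _ _).trans (add_le_add_right (measureReal_biUnion_finset_le _ _) _)
    _ = Fintype.card ι - 1 := by
        simp [Measure.real, Real.volume_Icc, card_erase_of_mem,
          Nat.cast_sub (Fintype.card_pos_iff.2 ⟨i⟩)]

lemma abs_coveredLength_sub_le (a b : ℝ) :
    |coveredLength v a - coveredLength v b| ≤ |a - b| := by
  wlog hab : b ≤ a generalizing a b
  · rw [abs_sub_comm, abs_sub_comm a]
    exact this b a (le_of_not_ge hab)
  rw [abs_of_nonneg (sub_nonneg.2 (monotone_coveredLength v hab)),
    abs_of_nonneg (sub_nonneg.2 hab)]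
  exact coveredLength_sub_le v hab

lemma min_abs_sub_le_abs_coveredLength_sub (i j : ι) :
    min |v i - v j| 1 ≤ |coveredLength v (v i) - coveredLength v (v j)| := by
  wlog hij : v j ≤ v i generalizing i j
  · rw [abs_sub_comm, abs_sub_comm (coveredLength v _)]
    exact this j i (le_of_not_ge hij)
  rw [abs_of_nonneg (sub_nonneg.2 (monotone_coveredLength v hij)),
    abs_of_nonneg (sub_nonneg.2 hij)]
  exact min_sub_le_coveredLength_sub v j hij

end CoveredLength

namespace EuclideanSpace
variable {κ : Type*} [Fintype κ]

lemma norm_le_norm_of_forall_abs_le {u v : EuclideanSpace ℝ κ} (h : ∀ k, |u k| ≤ |v k|) :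
    ‖u‖ ≤ ‖v‖ := by
  simp only [EuclideanSpace.norm_eq, Real.norm_eq_abs]
  exact Real.sqrt_le_sqrt (sum_le_sum fun k _ => pow_le_pow_left₀ (abs_nonneg _) (h k) 2)

lemma norm_eq_or_one_le_norm {u v : EuclideanSpace ℝ κ} (hle : ∀ k, |u k| ≤ |v k|)
    (hge : ∀ k, min |v k| 1 ≤ |u k|) : ‖u‖ = ‖v‖ ∨ 1 ≤ ‖u‖ := by
  by_cases heq : ∀ k, |u k| = |v k|
  · exact Or.inl (by simp only [EuclideanSpace.norm_eq, Real.norm_eq_abs, heq])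
  · push Not at heq
    obtain ⟨k, hk⟩ := heq
    have h1 : 1 ≤ |u k| := (min_le_iff.1 (hge k)).resolve_left ((hle k).lt_of_ne hk).not_ge
    exact Or.inr (h1.trans (by simpa using PiLp.norm_apply_le u k))

end EuclideanSpace

section Compression
variable {ι κ : Type*} [Fintype ι]

noncomputable def compressGaps (y : ι → EuclideanSpace ℝ κ) (i : ι) : EuclideanSpace ℝ κ :=
  WithLp.toLp 2 fun k => coveredLength (fun j => y j k) (y i k)

lemma compressGaps_apply_mem_Icc (y : ι → EuclideanSpace ℝ κ) (i : ι) (k : κ) :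
    compressGaps y i k ∈ Icc 0 (Fintype.card ι - 1 : ℝ) :=
  ⟨measureReal_nonneg, coveredLength_le_card_sub_one (fun j => y j k) i⟩

variable [Fintype κ]

lemma norm_compressGaps_sub_le (y : ι → EuclideanSpace ℝ κ) (i j : ι) :
    ‖compressGaps y i - compressGaps y j‖ ≤ ‖y i - y j‖ :=
  EuclideanSpace.norm_le_norm_of_forall_abs_le fun _ => abs_coveredLength_sub_le _ _ _

lemma norm_compressGaps_sub_eq_or_one_le (y : ι → EuclideanSpace ℝ κ) (i j : ι) :
    ‖compressGaps y i - compressGaps y j‖ = ‖y i - y j‖ ∨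
      1 ≤ ‖compressGaps y i - compressGaps y j‖ :=
  EuclideanSpace.norm_eq_or_one_le_norm (fun _ => abs_coveredLength_sub_le _ _ _)
    fun k => min_abs_sub_le_abs_coveredLength_sub (fun l => y l k) i j

end Compression

lemma Finset.add_card_sub_one_nsmul_le_sum {ι M : Type*} [Fintype ι] [AddCommMonoid M]
    [PartialOrder M] [IsOrderedAddMonoid M] {f : ι → M} {c m : M} (a : ι) (hc : ∀ p, c ≤ f p)
    (ha : m ≤ f a) :
    m + (Fintype.card ι - 1) • c ≤ ∑ p, f p := by
  classical
  rw [← add_sum_erase _ _ (mem_univ a), ← card_univ, ← card_erase_of_mem (mem_univ a)]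
  exact add_le_add ha (card_nsmul_le_sum _ _ _ fun p _ => hc p)

lemma isCompact_setOf_forall_apply_mem_Icc {ι κ : Type*} [Fintype κ] (a b : ℝ) :
    IsCompact {x : ι → EuclideanSpace ℝ κ | ∀ i k, x i k ∈ Icc a b} := by
  have hpoint : {p : EuclideanSpace ℝ κ | ∀ k, p k ∈ Icc a b} =
      (PiLp.continuousLinearEquiv 2 ℝ _).toHomeomorph ⁻¹' univ.pi fun _ => Icc a b := by
    ext; simp [Pi.le_def, forall_and]
  have hconf : {x : ι → EuclideanSpace ℝ κ | ∀ i k, x i k ∈ Icc a b} =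
      univ.pi fun _ => {p : EuclideanSpace ℝ κ | ∀ k, p k ∈ Icc a b} := by
    ext; simp
  rw [hconf, hpoint]
  exact isCompact_univ_pi fun _ =>
    (Homeomorph.isCompact_preimage _).2 (isCompact_univ_pi fun _ => isCompact_Icc)

lemma isClosed_setOf_le_norm_sub {ι E : Type*} [SeminormedAddCommGroup E] (δ : ℝ) :
    IsClosed {x : ι → E | ∀ i j, i ≠ j → δ ≤ ‖x i - x j‖} := by
  simp only [ofPred_forall]
  exact isClosed_iInter fun i => isClosed_iInter fun j => isClosed_iInter fun _ =>
    isClosed_le continuous_const (by fun_prop)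

lemma exists_apply_mem_Icc_one_le_norm_sub {d : ℕ} (hd : 1 ≤ d) (n : ℕ) :
    ∃ z : Fin n → EuclideanSpace ℝ (Fin d),
      (∀ i k, z i k ∈ Icc (0 : ℝ) (n - 1)) ∧ ∀ i j, i ≠ j → 1 ≤ ‖z i - z j‖ := by
  refine ⟨fun i => PiLp.single 2 ⟨0, hd⟩ (i : ℝ), fun i k => ?_, fun i j hij => ?_⟩
  · have hi : (i : ℝ) + 1 ≤ n := by exact_mod_cast i.isLt
    simp only [PiLp.single_apply]
    split_ifs <;> constructor <;> first | positivity | linarith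
  · rw [← PiLp.single_sub, PiLp.norm_single, Real.norm_eq_abs]
    rcases lt_or_gt_of_ne (Fin.val_ne_of_ne hij) with hlt | hlt
    · have : (i : ℝ) + 1 ≤ j := by exact_mod_cast hlt
      exact le_abs.2 (Or.inr (by linarith))
    · have : (j : ℝ) + 1 ≤ i := by exact_mod_cast hlt
      exact le_abs.2 (Or.inl (by linarith))

section Energy
variable {d n : ℕ} {α γ : ℝ}

lemma En_eq_sum_potential (x : Fin n → EuclideanSpace ℝ (Fin d)) :
    En d n α γ x = ∑ i, ∑ j, if i = j then 0 else potential α γ ‖x i - x j‖ := rfl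

lemma continuousOn_En : ContinuousOn (En d n α γ) {x | Function.Injective x} := by
  refine continuousOn_finsetSum _ fun i _ => continuousOn_finsetSum _ fun j _ => ?_
  split_ifs with hij
  · exact continuousOn_const
  · exact continuousOn_potential.comp (by fun_prop) fun x hx => norm_sub_pos_iff.2 (hx.ne hij)

lemma En_compressGaps_le (hα : α ≠ 0) (hγ : γ ≠ 0) (hαγ : α ≤ γ)
    (y : Fin n → EuclideanSpace ℝ (Fin d)) : En d n α γ (compressGaps y) ≤ En d n α γ y := by
  refine sum_le_sum fun i _ => sum_le_sum fun j _ => ?_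
  split_ifs
  · rfl
  · have hle := norm_compressGaps_sub_le y i j
    rcases norm_compressGaps_sub_eq_or_one_le y i j with heq | hone
    · exact (congrArg (potential α γ) heq).le
    · exact monotoneOn_potential hα hγ hαγ hone (hone.trans hle) hle

variable (hαγ : α < γ) (hγ : γ < 0)
include hαγ hγ

lemma En_neg (hn : 2 ≤ n) {x : Fin n → EuclideanSpace ℝ (Fin d)}
    (hx : ∀ i j, i ≠ j → 1 ≤ ‖x i - x j‖) : En d n α γ x < 0 := by
  have hterm : ∀ i j, i ≠ j → potential α γ ‖x i - x j‖ < 0 := fun i j hij =>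
    potential_neg hαγ hγ (hx i j hij)
  let i₀ : Fin n := ⟨0, by omega⟩
  let i₁ : Fin n := ⟨1, by omega⟩
  have h01 : i₀ ≠ i₁ := by simp [i₀, i₁]
  rw [En_eq_sum_potential]
  refine sum_neg' (fun i _ => sum_nonpos fun j _ => ?_) ⟨i₀, mem_univ _,
    sum_neg' (fun j _ => ?_) ⟨i₁, mem_univ _, by simpa [h01] using hterm _ _ h01⟩⟩
  all_goals split_ifs with hij
  all_goals first | rfl | exact (hterm _ _ hij).le

lemma En_pos {y : Fin n → EuclideanSpace ℝ (Fin d)} (hy : Function.Injective y) {i j : Fin n}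
    (hij : i ≠ j) (hlarge : -(n : ℝ) ^ 2 * potential α γ 1 ≤ potential α γ ‖y i - y j‖) :
    0 < En d n α γ y := by
  have hw₁ : potential α γ 1 < 0 := potential_neg hαγ hγ le_rfl
  have hterm : ∀ p : Fin n × Fin n,
      potential α γ 1 ≤ if p.1 = p.2 then 0 else potential α γ ‖y p.1 - y p.2‖ := by
    rintro ⟨k, l⟩
    split_ifs with hkl
    · exact hw₁.le
    · exact potential_one_le (hαγ.trans hγ).ne hγ.ne hαγ.le (norm_sub_pos_iff.2 (hy.ne hkl))
  have hsum := add_card_sub_one_nsmul_le_sum (i, j) hterm (by simpa [hij] using hlarge)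
  rw [Fintype.card_prod, Fintype.card_fin, nsmul_eq_mul, Nat.cast_sub (Nat.mul_pos i.pos i.pos)]
    at hsum
  push_cast at hsum
  rw [En_eq_sum_potential, ← Fintype.sum_prod_type']
  nlinarith

end Energy

theorem stmt_6 (d n : ℕ) (hd : 1 ≤ d) (hn : 2 ≤ n) (α γ : ℝ) (h : α < γ) (hγ : γ < 0) :
    ∃ x : Fin n → EuclideanSpace ℝ (Fin d), Function.Injective x ∧
      (∀ i k, x i k ∈ Set.Icc (0 : ℝ) (n - 1)) ∧
      En d n α γ x < 0 ∧
      ∀ y : Fin n → EuclideanSpace ℝ (Fin d), Function.Injective y →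
        En d n α γ x ≤ En d n α γ y := by
  obtain ⟨δ, hδ, hδ1, hlarge⟩ := exists_le_potential h hγ (-(n : ℝ) ^ 2 * potential α γ 1)
  let K := {x : Fin n → EuclideanSpace ℝ (Fin d) |
    (∀ i k, x i k ∈ Icc (0 : ℝ) (n - 1)) ∧ ∀ i j, i ≠ j → δ ≤ ‖x i - x j‖}
  have hKinj : ∀ x ∈ K, Function.Injective x := fun x hx i j hxij =>
    by_contra fun hij => (hδ.trans_le (hx.2 i j hij)).ne' (by simp [hxij])
  obtain ⟨z, hz, hz1⟩ := exists_apply_mem_Icc_one_le_norm_sub hd n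
  have hzK : z ∈ K := ⟨hz, fun i j hij => hδ1.trans (hz1 i j hij)⟩
  have hKc : IsCompact K := (isCompact_setOf_forall_apply_mem_Icc _ _).inter_right
    (isClosed_setOf_le_norm_sub δ)
  obtain ⟨x, hxK, hxmin⟩ :=
    hKc.exists_isMinOn ⟨z, hzK⟩ ((continuousOn_En (α := α) (γ := γ)).mono hKinj)
  have hxz : En d n α γ x < 0 := (hxmin hzK).trans_lt (En_neg h hγ hn hz1)
  refine ⟨x, hKinj x hxK, hxK.1, hxz, fun y hy => ?_⟩
  by_cases hsep : ∀ i j, i ≠ j → δ ≤ ‖y i - y j‖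
  · have hcK : compressGaps y ∈ K := by
      refine ⟨fun i k => by simpa using compressGaps_apply_mem_Icc y i k, fun i j hij => ?_⟩
      rcases norm_compressGaps_sub_eq_or_one_le y i j with heq | hone
      · exact heq ▸ hsep i j hij
      · exact hδ1.trans hone
    exact (hxmin hcK).trans (En_compressGaps_le (h.trans hγ).ne hγ.ne h.le y)
  · push Not at hsep
    obtain ⟨i, j, hij, hclose⟩ := hsep
    exact hxz.le.trans (En_pos h hγ hy hij
      (hlarge _ (norm_sub_pos_iff.2 (hy.ne hij)) hclose.le)).le
end

section
/- Suppose γ ≥ 2 and 1 ≤ α < γ. Any global minimizer (x_1,…,x_n) of E_n in (ℝ^d)^n has diameter max_{i,j}|x_i − x_j| ≤ (2/min(C_γ,1))^{1/(γ−α)}, where C_γ is the constant in the monotonicity inequality ⟨|η|^{γ−2}η − |ξ|^{γ−2}ξ, η−ξ⟩ ≥ C_γ|η−ξ|^γ. In particular the bound is independent of n. -/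
/-! Moving particle `i` of a minimizer onto particle `j` cannot lower the energy. Doing this both
for `x i ↦ x j` and for `x j ↦ x i` and adding, the interactions with all other particles cancel,
which leaves `w ‖x i - x j‖ ≤ w 0 = 0`, i.e. `‖x i - x j‖ ^ (γ - α) ≤ γ / α`. Testing the
monotonicity inequality at `η = e`, `ξ = -e` for a unit vector `e` gives `C * 2 ^ γ ≤ 4`, and with
Bernoulli's `2 * γ ≤ 2 ^ γ` this yields `C * γ ≤ 2`, hence `γ / α ≤ γ ≤ 2 / min C 1`. -/

open Finset

section PairEnergy

variable {ι E : Type*} [Fintype ι] [DecidableEq ι] [SeminormedAddCommGroup E]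

def pairEnergy (w : ℝ → ℝ) (x : ι → E) : ℝ :=
  ∑ a, ∑ b, if a = b then 0 else w ‖x a - x b‖

theorem pairEnergy_eq_add_sum_erase (w : ℝ → ℝ) (x : ι → E) (i : ι) :
    pairEnergy w x = 2 * ∑ b ∈ univ.erase i, w ‖x i - x b‖
      + ∑ a ∈ univ.erase i, ∑ b ∈ univ.erase i, if a = b then 0 else w ‖x a - x b‖ := by
  have row : ∀ a, (∑ b, if a = b then 0 else w ‖x a - x b‖)
      = (if a = i then 0 else w ‖x a - x i‖)
        + ∑ b ∈ univ.erase i, if a = b then 0 else w ‖x a - x b‖ := fun a => by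
    rw [← add_sum_erase _ _ (mem_univ i)]
  rw [pairEnergy, ← add_sum_erase _ _ (mem_univ i)]
  simp only [row, sum_add_distrib, if_true, zero_add]
  rw [sum_congr rfl fun a ha => if_neg (ne_of_mem_erase ha),
    sum_congr rfl fun b hb => if_neg (ne_of_mem_erase hb).symm]
  simp only [norm_sub_rev (x _) (x i)]
  ring

theorem pairEnergy_update (w : ℝ → ℝ) (x : ι → E) (i : ι) (v : E) :
    pairEnergy w (Function.update x i v)
      = pairEnergy w x + 2 * ∑ b ∈ univ.erase i, (w ‖v - x b‖ - w ‖x i - x b‖) := by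
  rw [pairEnergy_eq_add_sum_erase w _ i, pairEnergy_eq_add_sum_erase w x i, sum_sub_distrib]
  have off_i : ∀ a ∈ univ.erase i, Function.update x i v a = x a :=
    fun a ha => Function.update_of_ne (ne_of_mem_erase ha) _ _
  rw [sum_congr rfl fun b hb => by rw [Function.update_self, off_i b hb],
    sum_congr rfl fun a ha => sum_congr rfl fun b hb => by rw [off_i a ha, off_i b hb]]
  ring

theorem weight_norm_sub_le_weight_zero {w : ℝ → ℝ} {x : ι → E}
    (hmin : ∀ y : ι → E, pairEnergy w x ≤ pairEnergy w y) (i j : ι) :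
    w ‖x i - x j‖ ≤ w 0 := by
  have move_i := pairEnergy_update w x i (x j)
  have move_j := pairEnergy_update w x j (x i)
  rw [sum_erase_eq_sub (mem_univ i)] at move_i
  rw [sum_erase_eq_sub (mem_univ j)] at move_j
  have hsum : ∑ b, (w ‖x i - x b‖ - w ‖x j - x b‖) = -∑ b, (w ‖x j - x b‖ - w ‖x i - x b‖) := by
    rw [← sum_neg_distrib]; simp only [neg_sub]
  simp only [sub_self, norm_zero, norm_sub_rev (x j) (x i)] at move_i move_j
  rw [hsum] at move_j
  linarith [hmin (Function.update x i (x j)), hmin (Function.update x j (x i))]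

end PairEnergy

theorem mul_two_rpow_le_four_of_monotonicity {E : Type*} [NormedAddCommGroup E]
    [InnerProductSpace ℝ E] {γ C : ℝ}
    (hineq : ∀ η ξ : E, inner ℝ (‖η‖ ^ (γ - 2) • η - ‖ξ‖ ^ (γ - 2) • ξ) (η - ξ) ≥ C * ‖η - ξ‖ ^ γ)
    {e : E} (he : ‖e‖ = 1) : C * 2 ^ γ ≤ 4 := by
  have h := hineq e (-e)
  have h2e : ‖(2 : ℝ) • e‖ = 2 := by rw [norm_smul, he]; norm_num
  rw [norm_neg, he, Real.one_rpow, one_smul, one_smul, sub_neg_eq_add, ← two_smul ℝ e,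
    real_inner_self_eq_norm_sq, h2e] at h
  linarith

theorem two_mul_le_two_rpow {γ : ℝ} (hγ : 2 ≤ γ) : 2 * γ ≤ (2 : ℝ) ^ γ := by
  have bernoulli := one_add_mul_self_le_rpow_one_add (by norm_num : (-1 : ℝ) ≤ 1)
    (by linarith : (1 : ℝ) ≤ γ - 1)
  rw [show (2 : ℝ) ^ γ = 2 * 2 ^ (γ - 1) by
    rw [← Real.rpow_one_add' zero_le_two (by linarith)]; ring_nf]
  norm_num at bernoulli
  linarith

theorem le_rpow_of_rpow_div_le_rpow_div {r α γ : ℝ} (hr : 0 ≤ r) (hα : 0 < α) (hαγ : α < γ)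
    (h : r ^ γ / γ ≤ r ^ α / α) : r ≤ (γ / α) ^ (1 / (γ - α)) := by
  have hγ : 0 < γ := hα.trans hαγ
  rcases hr.eq_or_lt with rfl | hr
  · positivity
  have hpow : r ^ (γ - α) ≤ γ / α := by
    rw [Real.rpow_sub hr, div_le_div_iff₀ (by positivity) hα]
    rw [div_le_div_iff₀ hγ hα] at h
    linarith
  calc r = (r ^ (γ - α)) ^ (1 / (γ - α)) := by
        rw [← Real.rpow_mul hr.le, mul_one_div_cancel (by linarith), Real.rpow_one]
    _ ≤ (γ / α) ^ (1 / (γ - α)) :=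
        Real.rpow_le_rpow (by positivity) hpow (by simp only [one_div, inv_nonneg]; linarith)

theorem En_eq_pairEnergy (d n : ℕ) (α γ : ℝ) :
    En d n α γ = pairEnergy (fun r => r ^ γ / γ - r ^ α / α) := rfl

theorem stmt_10 (d n : ℕ) (α γ : ℝ) (hα : 1 ≤ α) (h : α < γ) (hγ : 2 ≤ γ)
    (C : ℝ) (hC : 0 < C)
    (hineq : ∀ η ξ : EuclideanSpace ℝ (Fin d),
      (inner ℝ (‖η‖ ^ (γ - 2) • η - ‖ξ‖ ^ (γ - 2) • ξ) (η - ξ) : ℝ) ≥ C * ‖η - ξ‖ ^ γ)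
    (x : Fin n → EuclideanSpace ℝ (Fin d))
    (hmin : ∀ y : Fin n → EuclideanSpace ℝ (Fin d), En d n α γ x ≤ En d n α γ y) :
    ∀ i j, ‖x i - x j‖ ≤ (2 / min C 1) ^ (1 / (γ - α)) := by
  intro i j
  rcases eq_or_ne (x i) (x j) with hij | hij
  · rw [hij, sub_self, norm_zero]
    exact Real.rpow_nonneg (div_nonneg zero_le_two (le_min hC.le zero_le_one)) _
  have hw : ‖x i - x j‖ ^ γ / γ ≤ ‖x i - x j‖ ^ α / α := by
    have := weight_norm_sub_le_weight_zero (by simpa only [En_eq_pairEnergy] using hmin) i j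
    simpa [Real.zero_rpow (by linarith : γ ≠ 0), Real.zero_rpow (by linarith : α ≠ 0)] using this
  have hCγ : C * γ ≤ 2 := by
    have := mul_two_rpow_le_four_of_monotonicity hineq
      (norm_smul_inv_norm (𝕜 := ℝ) (sub_ne_zero.mpr hij))
    nlinarith [two_mul_le_two_rpow hγ]
  have hγα : γ / α ≤ 2 / min C 1 := calc
    γ / α ≤ γ := div_le_self (by linarith) hα
    _ ≤ 2 / min C 1 := by
      rw [le_div_iff₀ (lt_min hC one_pos)]
      nlinarith [min_le_left C 1]
  calc ‖x i - x j‖ ≤ (γ / α) ^ (1 / (γ - α)) :=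
        le_rpow_of_rpow_div_le_rpow_div (norm_nonneg _) (by linarith) h hw
    _ ≤ (2 / min C 1) ^ (1 / (γ - α)) :=
        Real.rpow_le_rpow (by positivity) hγα (one_div_nonneg.mpr (by linarith))
end

section
/- Suppose 1 ≤ α < γ < 2. Any global minimizer (x_1,…,x_n) of E_n in (ℝ^d)^n has diameter bounded by (2/min(2^{γ−2}c_γ, 1))^{1/(γ−α)}, where c_γ is the constant in the inequality ⟨|η|^{γ−2}η − |ξ|^{γ−2}ξ, η−ξ⟩ ≥ c_γ(|η|+|ξ|)^{γ−2}|η−ξ|². The bound is independent of n. -/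
open Finset

/-!
At a global minimiser every point is in force balance,
`∑ₖ ‖xₚ - xₖ‖^(γ-2) (xₚ - xₖ) = ∑ₖ ‖xₚ - xₖ‖^(α-2) (xₚ - xₖ)` (the first-order condition in `xₚ`).
Let `xᵢ, xⱼ` realise the diameter `D` and pair the difference of the balance equations at `i` and
`j` with `xᵢ - xⱼ`. Termwise, the monotonicity inequality bounds the `γ`-side below by
`2^(γ-2) c D^γ` (as `‖η‖ + ‖ξ‖ ≤ 2D` and `γ ≤ 2`), and Cauchy–Schwarz bounds the `α`-side above by
`2 D^α` (as `α ≥ 1`). Hence `2^(γ-2) c D^(γ-α) ≤ 2`.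
-/

open Real
open scoped RealInnerProductSpace

section Calculus

variable {E : Type*} [NormedAddCommGroup E] [InnerProductSpace ℝ E]

theorem hasFDerivAt_norm_rpow_of_ne_zero {x : E} (hx : x ≠ 0) (p : ℝ) :
    HasFDerivAt (fun x : E ↦ ‖x‖ ^ p) ((p * ‖x‖ ^ (p - 2)) • innerSL ℝ x) x := by
  convert ((hasStrictFDerivAt_norm_sq x).rpow_const (p := p / 2) (by simp [hx])).hasFDerivAt
    using 1
  · ext y
    rw [← rpow_natCast_mul (norm_nonneg y)]
    ring_nf
  · rw [← rpow_natCast_mul (norm_nonneg x), ← Nat.cast_smul_eq_nsmul ℝ, smul_smul]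
    ring_nf

theorem hasFDerivAt_norm_sub_rpow_div {a b : E} {p : ℝ} (hp : p ≠ 0) (h : a ≠ b ∨ 1 < p) :
    HasFDerivAt (fun z : E ↦ ‖z - b‖ ^ p / p) (innerSL ℝ (‖a - b‖ ^ (p - 2) • (a - b))) a := by
  have h' : HasFDerivAt (fun y : E ↦ ‖y‖ ^ p) ((p * ‖a - b‖ ^ (p - 2)) • innerSL ℝ (a - b))
      (a - b) := by
    rcases h with hab | hp
    · exact hasFDerivAt_norm_rpow_of_ne_zero (sub_ne_zero.2 hab) p
    · exact hasFDerivAt_norm_rpow _ hp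
  have h'' : HasFDerivAt (fun z : E ↦ p⁻¹ • ‖z - b‖ ^ p) _ a :=
    (h'.comp a ((hasFDerivAt_id a).sub_const b)).fun_const_smul p⁻¹
  simp only [smul_eq_mul, ← div_eq_inv_mul] at h''
  refine h''.congr_fderiv ?_
  ext v
  simp only [map_smul, ContinuousLinearMap.comp_id, smul_apply,
    coe_innerSL_apply, smul_eq_mul]
  field_simp

/-- At `a = b` the nonsmooth term `‖z - b‖ ^ α / α` is dropped from the majorant; this gives the
first-order condition at a minimiser also for `α = 1`, without first separating the points. -/
theorem exists_majorant_hasFDerivAt {α γ : ℝ} (hα : 0 < α) (hγ : 1 < γ) (a b : E) :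
    ∃ g : E → ℝ, (∀ z, ‖z - b‖ ^ γ / γ - ‖z - b‖ ^ α / α ≤ g z) ∧
      g a = ‖a - b‖ ^ γ / γ - ‖a - b‖ ^ α / α ∧
      HasFDerivAt g (innerSL ℝ ((‖a - b‖ ^ (γ - 2) - ‖a - b‖ ^ (α - 2)) • (a - b))) a := by
  have hA := hasFDerivAt_norm_sub_rpow_div (a := a) (b := b) (by positivity) (.inr hγ)
  by_cases hab : a = b
  · subst hab
    refine ⟨fun z ↦ ‖z - a‖ ^ γ / γ, fun z ↦ ?_, by simp [hα.ne'], by simpa using hA⟩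
    have : 0 ≤ ‖z - a‖ ^ α / α := by positivity
    linarith
  · refine ⟨_, fun z ↦ le_rfl, rfl, ?_⟩
    refine (hA.fun_sub (hasFDerivAt_norm_sub_rpow_div hα.ne' (.inl hab))).congr_fderiv ?_
    rw [sub_smul, map_sub]

end Calculus

section PairBounds

variable {E : Type*} [NormedAddCommGroup E] [InnerProductSpace ℝ E]

theorem norm_norm_rpow_smul_le (w : E) (s : ℝ) : ‖‖w‖ ^ (s - 2) • w‖ ≤ ‖w‖ ^ (s - 1) := by
  rcases eq_or_ne w 0 with rfl | hw
  · simpa using rpow_nonneg le_rfl _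
  · rw [norm_smul, norm_of_nonneg (by positivity), ← rpow_add_one (norm_ne_zero_iff.2 hw),
      show s - 2 + 1 = s - 1 by ring]

theorem inner_rpow_smul_sub_le {α D : ℝ} (hα : 1 ≤ α) {η ξ u : E} (hη : ‖η‖ ≤ D)
    (hξ : ‖ξ‖ ≤ D) (hu : ‖u‖ ≤ D) :
    ⟪‖η‖ ^ (α - 2) • η - ‖ξ‖ ^ (α - 2) • ξ, u⟫ ≤ 2 * D ^ α := by
  have hD : 0 ≤ D := (norm_nonneg u).trans hu
  have hmono : ∀ w : E, ‖w‖ ≤ D → ‖‖w‖ ^ (α - 2) • w‖ ≤ D ^ (α - 1) := fun w hw ↦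
    (norm_norm_rpow_smul_le w α).trans (rpow_le_rpow (norm_nonneg w) hw (by linarith))
  calc ⟪‖η‖ ^ (α - 2) • η - ‖ξ‖ ^ (α - 2) • ξ, u⟫
      ≤ ‖‖η‖ ^ (α - 2) • η - ‖ξ‖ ^ (α - 2) • ξ‖ * ‖u‖ := real_inner_le_norm _ _
    _ ≤ (D ^ (α - 1) + D ^ (α - 1)) * D := by
      gcongr
      exact (norm_sub_le _ _).trans (add_le_add (hmono η hη) (hmono ξ hξ))
    _ = 2 * D ^ α := by
      rw [← two_mul, mul_assoc, ← rpow_add_one' hD (by linarith)]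
      ring_nf

theorem two_rpow_mul_rpow_le_inner {c γ D : ℝ} (hc : 0 ≤ c) (hγ : γ ≤ 2) (hD : 0 < D)
    {η ξ : E} (hη : ‖η‖ ≤ D) (hξ : ‖ξ‖ ≤ D) (hηξ : ‖η - ξ‖ = D)
    (h : c * (‖η‖ + ‖ξ‖) ^ (γ - 2) * ‖η - ξ‖ ^ 2 ≤
      ⟪‖η‖ ^ (γ - 2) • η - ‖ξ‖ ^ (γ - 2) • ξ, η - ξ⟫) :
    2 ^ (γ - 2) * c * D ^ γ ≤ ⟪‖η‖ ^ (γ - 2) • η - ‖ξ‖ ^ (γ - 2) • ξ, η - ξ⟫ := by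
  have hsum : 0 < ‖η‖ + ‖ξ‖ := hD.trans_le (hηξ ▸ norm_sub_le η ξ)
  refine le_trans ?_ h
  have hDγ : D ^ γ = D ^ (γ - 2) * D ^ 2 := by
    rw [← rpow_natCast, ← rpow_add hD]
    ring_nf
  calc 2 ^ (γ - 2) * c * D ^ γ = c * (2 * D) ^ (γ - 2) * D ^ 2 := by
        rw [mul_rpow zero_le_two hD.le, hDγ]
        ring
    _ ≤ c * (‖η‖ + ‖ξ‖) ^ (γ - 2) * ‖η - ξ‖ ^ 2 := by
      rw [hηξ]
      have := rpow_le_rpow_of_nonpos hsum (by linarith : ‖η‖ + ‖ξ‖ ≤ 2 * D)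
        (by linarith : γ - 2 ≤ 0)
      gcongr

end PairBounds

theorem le_rpow_one_div_of_mul_rpow_le {m K D α γ : ℝ} (hm : 0 < m) (hD : 0 < D)
    (hαγ : α < γ) (h : m * D ^ γ ≤ K * D ^ α) : D ≤ (K / m) ^ (1 / (γ - α)) := by
  have hK : D ^ (γ - α) ≤ K / m := by
    rw [le_div_iff₀ hm, mul_comm]
    have hDγ : D ^ γ = D ^ (γ - α) * D ^ α := by rw [← rpow_add hD]; ring_nf
    rw [hDγ, ← mul_assoc] at h
    exact le_of_mul_le_mul_right h (rpow_pos_of_pos hD α)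
  rw [one_div, le_rpow_inv_iff_of_pos hD.le ((rpow_pos_of_pos hD _).le.trans hK)
    (sub_pos.2 hαγ)]
  exact hK

section Force

variable {ι E : Type*} [Fintype ι] [NormedAddCommGroup E] [InnerProductSpace ℝ E]

/-- The gradient at `x p` of `z ↦ ∑ k, ‖z - x k‖ ^ s / s`. -/
noncomputable def force (s : ℝ) (x : ι → E) (p : ι) : E :=
  ∑ k, ‖x p - x k‖ ^ (s - 2) • (x p - x k)

theorem inner_force_sub_force (s : ℝ) (x : ι → E) (i j : ι) :
    ⟪force s x i - force s x j, x i - x j⟫ = ∑ k,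
      ⟪‖x i - x k‖ ^ (s - 2) • (x i - x k) - ‖x j - x k‖ ^ (s - 2) • (x j - x k),
        (x i - x k) - (x j - x k)⟫ := by
  simp only [force, ← sum_sub_distrib, sum_inner, sub_sub_sub_cancel_right]

variable {x : ι → E} {i j : ι}

theorem card_mul_le_inner_force_sub_force {c γ : ℝ} (hc : 0 ≤ c) (hγ : γ ≤ 2)
    (hineq : ∀ η ξ : E, ¬(η = 0 ∧ ξ = 0) →
      c * (‖η‖ + ‖ξ‖) ^ (γ - 2) * ‖η - ξ‖ ^ 2 ≤ ⟪‖η‖ ^ (γ - 2) • η - ‖ξ‖ ^ (γ - 2) • ξ, η - ξ⟫)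
    (hdiam : ∀ a b, ‖x a - x b‖ ≤ ‖x i - x j‖) (hD : 0 < ‖x i - x j‖) :
    Fintype.card ι * (2 ^ (γ - 2) * c * ‖x i - x j‖ ^ γ) ≤
      ⟪force γ x i - force γ x j, x i - x j⟫ := by
  rw [inner_force_sub_force, ← card_univ, ← nsmul_eq_mul]
  refine card_nsmul_le_sum _ _ _ fun k _ ↦ ?_
  have hsub : ‖(x i - x k) - (x j - x k)‖ = ‖x i - x j‖ := by rw [sub_sub_sub_cancel_right]
  refine two_rpow_mul_rpow_le_inner hc hγ hD (hdiam _ _) (hdiam _ _) hsub (hineq _ _ ?_)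
  rintro ⟨hi, hj⟩
  rw [hi, hj, sub_zero, norm_zero] at hsub
  exact hD.ne hsub

theorem inner_force_sub_force_le_card_mul {α : ℝ} (hα : 1 ≤ α)
    (hdiam : ∀ a b, ‖x a - x b‖ ≤ ‖x i - x j‖) :
    ⟪force α x i - force α x j, x i - x j⟫ ≤ Fintype.card ι * (2 * ‖x i - x j‖ ^ α) := by
  rw [inner_force_sub_force, ← card_univ, ← nsmul_eq_mul]
  refine sum_le_card_nsmul _ _ _ fun k _ ↦ ?_
  exact inner_rpow_smul_sub_le hα (hdiam _ _) (hdiam _ _) (by rw [sub_sub_sub_cancel_right])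

end Force

theorem Finset.sum_sum_eq_sum_erase_sum_erase_add {ι M : Type*} [Fintype ι] [DecidableEq ι]
    [AddCommMonoid M] (f : ι → ι → M) (p : ι) :
    ∑ i, ∑ j, f i j = ∑ i ∈ univ.erase p, ∑ j ∈ univ.erase p, f i j
      + ∑ k ∈ univ.erase p, (f p k + f k p) + f p p := by
  simp only [← add_sum_erase univ _ (mem_univ p), sum_add_distrib]
  abel

theorem En_update_eq_add (d n : ℕ) (α γ : ℝ) (x : Fin n → EuclideanSpace ℝ (Fin d))
    (p : Fin n) : ∃ C, ∀ z, En d n α γ (Function.update x p z) =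
      2 * ∑ k ∈ univ.erase p, (‖z - x k‖ ^ γ / γ - ‖z - x k‖ ^ α / α) + C := by
  refine ⟨∑ i ∈ univ.erase p, ∑ j ∈ univ.erase p,
    if i = j then 0 else ‖x i - x j‖ ^ γ / γ - ‖x i - x j‖ ^ α / α, fun z ↦ ?_⟩
  rw [En, sum_sum_eq_sum_erase_sum_erase_add _ p, if_pos rfl, add_zero, add_comm, mul_sum]
  congr 1
  · refine sum_congr rfl fun k hk ↦ ?_
    have hkp := ne_of_mem_erase hk
    simp only [hkp, hkp.symm, if_false, Function.update_self, Function.update_of_ne hkp,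
      norm_sub_rev (x k) z]
    ring
  · refine sum_congr rfl fun i hi ↦ sum_congr rfl fun j hj ↦ ?_
    simp [ne_of_mem_erase hi, ne_of_mem_erase hj]

theorem force_eq_of_forall_En_le {d n : ℕ} {α γ : ℝ} (hα : 0 < α) (hγ : 1 < γ)
    {x : Fin n → EuclideanSpace ℝ (Fin d)} (hmin : ∀ y, En d n α γ x ≤ En d n α γ y)
    (p : Fin n) : force γ x p = force α x p := by
  obtain ⟨C, hC⟩ := En_update_eq_add d n α γ x p
  choose g hg_le hg_eq hg_deriv using fun k ↦ exists_majorant_hasFDerivAt hα hγ (x p) (x k)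
  set G := ∑ k ∈ univ.erase p, (‖x p - x k‖ ^ (γ - 2) - ‖x p - x k‖ ^ (α - 2)) • (x p - x k)
  have hlocal : IsLocalMin (fun z ↦ 2 * ∑ k ∈ univ.erase p, g k z + C) (x p) :=
    Filter.Eventually.of_forall fun z ↦ calc
      2 * ∑ k ∈ univ.erase p, g k (x p) + C = En d n α γ (Function.update x p (x p)) := by
        simp only [hg_eq, hC]
      _ ≤ En d n α γ (Function.update x p z) := by
        rw [Function.update_eq_self]
        exact hmin _
      _ ≤ 2 * ∑ k ∈ univ.erase p, g k z + C := by
        rw [hC]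
        gcongr with k
        exact hg_le k z
  have hderiv : HasFDerivAt (fun z ↦ 2 * ∑ k ∈ univ.erase p, g k z + C)
      (innerSL ℝ ((2 : ℝ) • G)) (x p) := by
    rw [map_smul, map_sum]
    exact ((HasFDerivAt.fun_sum fun k _ ↦ hg_deriv k).const_mul 2).add_const C
  have hG : G = 0 := by
    simpa using congrArg (fun L ↦ L G) (hlocal.hasFDerivAt_eq_zero hderiv)
  have hforce : force γ x p - force α x p = G := by
    rw [force, force, ← sum_sub_distrib, ← sum_erase_add _ _ (mem_univ p)]
    simp [sub_smul, G]
  rwa [← sub_eq_zero, hforce]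

theorem stmt_11 (d n : ℕ) (α γ : ℝ) (hα : 1 ≤ α) (h : α < γ) (hγ : γ < 2)
    (c : ℝ) (hc : 0 < c)
    (hineq : ∀ η ξ : EuclideanSpace ℝ (Fin d), ¬(η = 0 ∧ ξ = 0) →
      (inner ℝ (‖η‖ ^ (γ - 2) • η - ‖ξ‖ ^ (γ - 2) • ξ) (η - ξ) : ℝ) ≥
        c * (‖η‖ + ‖ξ‖) ^ (γ - 2) * ‖η - ξ‖ ^ 2)
    (x : Fin n → EuclideanSpace ℝ (Fin d))
    (hmin : ∀ y : Fin n → EuclideanSpace ℝ (Fin d), En d n α γ x ≤ En d n α γ y) :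
    ∀ i j, ‖x i - x j‖ ≤ (2 / min ((2 : ℝ) ^ (γ - 2) * c) 1) ^ (1 / (γ - α)) := by
  intro i j
  obtain ⟨q, -, hq⟩ := exists_max_image (univ : Finset (Fin n × Fin n))
    (fun q ↦ ‖x q.1 - x q.2‖) ⟨(i, j), mem_univ _⟩
  have hdiam : ∀ a b, ‖x a - x b‖ ≤ ‖x q.1 - x q.2‖ := fun a b ↦ hq (a, b) (mem_univ _)
  refine (hdiam i j).trans ?_
  rcases (norm_nonneg (x q.1 - x q.2)).eq_or_lt with hD | hD
  · rw [← hD]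
    positivity
  set D := ‖x q.1 - x q.2‖
  have hγ1 : 1 < γ := hα.trans_lt h
  have hbalance : ⟪force γ x q.1 - force γ x q.2, x q.1 - x q.2⟫ =
      ⟪force α x q.1 - force α x q.2, x q.1 - x q.2⟫ := by
    rw [force_eq_of_forall_En_le (by linarith) hγ1 hmin,
      force_eq_of_forall_En_le (by linarith) hγ1 hmin]
  have hcompare := (card_mul_le_inner_force_sub_force hc.le hγ.le hineq hdiam hD).trans
    (hbalance.le.trans (inner_force_sub_force_le_card_mul hα hdiam))
  have hn : (0 : ℝ) < Fintype.card (Fin n) := by simpa using i.pos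
  refine le_rpow_one_div_of_mul_rpow_le (by positivity) hD h ?_
  calc min (2 ^ (γ - 2) * c) 1 * D ^ γ ≤ 2 ^ (γ - 2) * c * D ^ γ := by
        gcongr
        exact min_le_left _ _
    _ ≤ 2 * D ^ α := le_of_mul_le_mul_left hcompare hn
end

section
/- Suppose α < γ < 0 and α < −2. If x = (x_1 ≤ … ≤ x_n) ∈ ℝ^n is a global minimizer of E_n (over distinct points in ℝ), then consecutive points satisfy x_{i+1} − x_i ≥ a_n, where a_n ∈ (0,1) is the unique small solution of w(a_n) = (1/α − 1/γ) n². -/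
open Finset

noncomputable def En1 (n : ℕ) (α γ : ℝ) (x : Fin n → ℝ) : ℝ :=
  ∑ i, ∑ j, if i = j then 0 else |x i - x j| ^ γ / γ - |x i - x j| ^ α / α

section pairPotential

variable {α γ : ℝ}

lemma pairPotential_one : pairPotential α γ 1 = 1 / γ - 1 / α := by
  simp [pairPotential]

lemma hasDerivAt_pairPotential (hα : α ≠ 0) (hγ : γ ≠ 0) {r : ℝ} (hr : r ≠ 0) :
    HasDerivAt (pairPotential α γ) (r ^ (γ - 1) - r ^ (α - 1)) r := by
  have := ((Real.hasDerivAt_rpow_const (p := γ) (Or.inl hr)).div_const γ).sub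
    ((Real.hasDerivAt_rpow_const (p := α) (Or.inl hr)).div_const α)
  rwa [mul_div_cancel_left₀ _ hγ, mul_div_cancel_left₀ _ hα] at this

lemma continuousOn_pairPotential (hα : α ≠ 0) (hγ : γ ≠ 0) :
    ContinuousOn (pairPotential α γ) (Set.Ioi 0) :=
  fun _ hr => (hasDerivAt_pairPotential hα hγ (ne_of_gt hr)).continuousAt.continuousWithinAt

lemma strictAntiOn_pairPotential_Ioc (hα : α ≠ 0) (hγ : γ ≠ 0) (h : α < γ) :
    StrictAntiOn (pairPotential α γ) (Set.Ioc 0 1) := by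
  refine strictAntiOn_of_deriv_neg (convex_Ioc 0 1)
    ((continuousOn_pairPotential hα hγ).mono Set.Ioc_subset_Ioi_self) fun r hr => ?_
  rw [interior_Ioc] at hr
  rw [(hasDerivAt_pairPotential hα hγ (ne_of_gt hr.1)).deriv, sub_neg]
  exact Real.rpow_lt_rpow_of_exponent_gt hr.1 hr.2 (by linarith)

lemma strictMonoOn_pairPotential_Ici (hα : α ≠ 0) (hγ : γ ≠ 0) (h : α < γ) :
    StrictMonoOn (pairPotential α γ) (Set.Ici 1) := by
  refine strictMonoOn_of_deriv_pos (convex_Ici 1)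
    ((continuousOn_pairPotential hα hγ).mono fun r (hr : 1 ≤ r) => zero_lt_one.trans_le hr)
    fun r hr => ?_
  rw [interior_Ici] at hr
  rw [(hasDerivAt_pairPotential hα hγ (by linarith [hr.out])).deriv, sub_pos]
  exact Real.rpow_lt_rpow_of_exponent_lt hr (by linarith)

lemma pairPotential_one_le (hα : α ≠ 0) (hγ : γ ≠ 0) (h : α < γ) {r : ℝ} (hr : 0 < r) :
    pairPotential α γ 1 ≤ pairPotential α γ r := by
  rcases le_total r 1 with hr1 | hr1
  · exact (strictAntiOn_pairPotential_Ioc hα hγ h).antitoneOn ⟨hr, hr1⟩ ⟨one_pos, le_rfl⟩ hr1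
  · exact (strictMonoOn_pairPotential_Ici hα hγ h).monotoneOn Set.self_mem_Ici hr1 hr1

lemma pairPotential_nonpos_of_one_le (hγ : γ < 0) (h : α < γ) {s : ℝ} (hs : 1 ≤ s) :
    pairPotential α γ s ≤ 0 := by
  have hα : α < 0 := h.trans hγ
  have hsα : 0 < s ^ α := Real.rpow_pos_of_pos (zero_lt_one.trans_le hs) α
  calc pairPotential α γ s
      ≤ s ^ α / γ - s ^ α / α := by
        unfold pairPotential
        exact sub_le_sub_right
          (div_le_div_of_nonpos_of_le hγ.le (Real.rpow_le_rpow_of_exponent_le hs h.le)) _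
    _ = s ^ α * (1 / γ - 1 / α) := by ring
    _ ≤ 0 := mul_nonpos_of_nonneg_of_nonpos hsα.le
        (sub_nonpos.2 (one_div_lt_one_div_of_neg_of_lt hγ h).le)

end pairPotential

lemma En1_eq (n : ℕ) (α γ : ℝ) (x : Fin n → ℝ) :
    En1 n α γ x = ∑ p : Fin n × Fin n,
      if p.1 = p.2 then 0 else pairPotential α γ |x p.1 - x p.2| := by
  rw [← univ_product_univ, sum_product]
  rfl

lemma En1_nonpos_of_one_le_dist {n : ℕ} {α γ : ℝ} (hγ : γ < 0) (h : α < γ) {y : Fin n → ℝ}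
    (hy : ∀ i j, i ≠ j → 1 ≤ |y i - y j|) : En1 n α γ y ≤ 0 := by
  rw [En1_eq]
  refine sum_nonpos fun p _ => ?_
  split_ifs with hp
  exacts [le_rfl, pairPotential_nonpos_of_one_le hγ h (hy _ _ hp)]

lemma one_le_abs_natCast_sub {n : ℕ} {i j : Fin n} (hij : i ≠ j) :
    1 ≤ |((i : ℕ) : ℝ) - (j : ℕ)| := by
  have h : (1 : ℤ) ≤ |((i : ℕ) : ℤ) - (j : ℕ)| :=
    Int.one_le_abs (sub_ne_zero.2 (by exact_mod_cast Fin.val_ne_of_ne hij))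
  exact_mod_cast h

lemma two_mul_add_le_En1 {n : ℕ} {α γ : ℝ} (hγ : γ < 0) (h : α < γ) {x : Fin n → ℝ}
    (hx : Function.Injective x) {i j : Fin n} (hij : i ≠ j) :
    2 * pairPotential α γ |x i - x j| + ((n : ℝ) ^ 2 - 2) * pairPotential α γ 1
      ≤ En1 n α γ x := by
  set f : Fin n × Fin n → ℝ := fun p =>
    if p.1 = p.2 then 0 else pairPotential α γ |x p.1 - x p.2|
  have hf_ge : ∀ p, pairPotential α γ 1 ≤ f p := by
    intro p
    by_cases hp : p.1 = p.2
    · simpa [f, hp, pairPotential_one] using (one_div_lt_one_div_of_neg_of_lt hγ h).le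
    · simpa [f, hp] using pairPotential_one_le (h.trans hγ).ne hγ.ne h
        (abs_pos.2 (sub_ne_zero.2 (hx.ne hp)))
  set pair : Finset (Fin n × Fin n) := {(i, j), (j, i)}
  have hne : (i, j) ≠ (j, i) := by simp [hij]
  have hpair : f (i, j) + f (j, i) = 2 * pairPotential α γ |x i - x j| := by
    simp [f, hij, hij.symm, abs_sub_comm (x j), two_mul]
  have hrest : ((n : ℝ) ^ 2 - 2) * pairPotential α γ 1 ≤ ∑ p ∈ univ \ pair, f p := by
    have hcard : (#(univ \ pair) : ℝ) = n ^ 2 - 2 := by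
      have := card_sdiff_add_card_eq_card (subset_univ pair)
      rw [card_pair hne, card_univ, Fintype.card_prod, Fintype.card_fin] at this
      rw [eq_sub_iff_add_eq, sq]
      exact_mod_cast this
    have := card_nsmul_le_sum (univ \ pair) f _ fun p _ => hf_ge p
    rwa [nsmul_eq_mul, hcard] at this
  rw [En1_eq, ← sum_sdiff (subset_univ pair), sum_pair hne, hpair]
  linarith

theorem stmt_13_general (n : ℕ) (α γ : ℝ) (h : α < γ) (hγ : γ < 0)
    (x : Fin n → ℝ) (hmono : Monotone x) (hinj : Function.Injective x)
    (hmin : ∀ y : Fin n → ℝ, Function.Injective y → En1 n α γ x ≤ En1 n α γ y)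
    (a : ℝ) (ha1 : a < 1)
    (haw : a ^ γ / γ - a ^ α / α = (1 / α - 1 / γ) * (n : ℝ) ^ 2) :
    ∀ i : Fin n, ∀ h1 : (i : ℕ) + 1 < n, x ⟨(i : ℕ) + 1, h1⟩ - x i ≥ a := by
  intro i hi
  by_contra! hgap
  set j : Fin n := ⟨i + 1, hi⟩
  have hij : i < j := Fin.lt_def.2 (Nat.lt_succ_self _)
  have hd : 0 < x j - x i := sub_pos.2 (hmono.strictMono_of_injective hinj hij)
  have hwd : (1 / α - 1 / γ) * (n : ℝ) ^ 2 < pairPotential α γ (x j - x i) :=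
    haw ▸ strictAntiOn_pairPotential_Ioc (h.trans hγ).ne hγ.ne h ⟨hd, by linarith⟩
      ⟨hd.trans hgap, ha1.le⟩ hgap
  have hlow := two_mul_add_le_En1 hγ h hinj hij.ne
  rw [abs_sub_comm, abs_of_pos hd, pairPotential_one] at hlow
  have hup : En1 n α γ x ≤ 0 :=
    (hmin _ (Nat.cast_injective.comp Fin.val_injective)).trans
      (En1_nonpos_of_one_le_dist hγ h fun _ _ => one_le_abs_natCast_sub)
  have hC : 0 < 1 / α - 1 / γ := sub_pos.2 (one_div_lt_one_div_of_neg_of_lt hγ h)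
  nlinarith

theorem stmt_13 (n : ℕ) (hn : 2 ≤ n) (α γ : ℝ) (h : α < γ) (hγ : γ < 0) (hα : α < -2)
    (x : Fin n → ℝ) (hmono : Monotone x) (hinj : Function.Injective x)
    (hmin : ∀ y : Fin n → ℝ, Function.Injective y → En1 n α γ x ≤ En1 n α γ y)
    (a : ℝ) (ha0 : 0 < a) (ha1 : a < 1)
    (haw : a ^ γ / γ - a ^ α / α = (1 / α - 1 / γ) * (n : ℝ) ^ 2) :
    ∀ i : Fin n, ∀ h1 : (i : ℕ) + 1 < n, x ⟨(i : ℕ) + 1, h1⟩ - x i ≥ a :=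
  stmt_13_general n α γ h hγ x hmono hinj hmin a ha1 haw
end

section
/- Suppose α < γ < 0 and α < −2. There is a constant C_{α,γ} > 0 such that for all sufficiently large n, every global minimizer x = (x_1 ≤ … ≤ x_n) of E_n in ℝ satisfies x_n − x_1 ≥ C_{α,γ} n^{1 + 2/α}. In particular, since 1 + 2/α > 0, the diameter tends to infinity with n. -/
/-!
Since `α < γ < 0`, the `r^α` term of `w` dominates at short range:
`w(r) ≥ r^α / (-2α) - M` for some constant `M ≥ 0`. Comparing a minimizer `x` with the lattice
configuration `j ↦ j`, all of whose pair energies are at most `-1/α`, gives `E_n(x) ≤ -n²/α`.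
Since every pair energy is at least `-M`, a single pair at distance `d` has
`w(d) + M ≤ E_n(x) + n²M`, so `d^α ≤ K n²` and `d ≥ K^{1/α} n^{2/α}`. Summing the `n - 1` consecutive gaps
bounds the diameter from below by a multiple of `n^{1 + 2/α}`.
-/

open Finset

lemma En1_eq_sum_pairPotential (n : ℕ) (α γ : ℝ) (x : Fin n → ℝ) :
    En1 n α γ x = ∑ i, ∑ j, if i = j then 0 else pairPotential α γ |x i - x j| :=
  rfl

lemma Finset.apply_add_le_sum_sum_add {ι : Type*} [Fintype ι] {f : ι → ι → ℝ} {M : ℝ}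
    (hf : ∀ i j, -M ≤ f i j) (a b : ι) :
    f a b + M ≤ ∑ i, ∑ j, f i j + Fintype.card ι ^ 2 * M := by
  have hnonneg : ∀ i j, 0 ≤ f i j + M := fun i j => by linarith [hf i j]
  calc f a b + M ≤ ∑ j, (f a j + M) :=
        single_le_sum (fun j _ => hnonneg a j) (mem_univ b)
    _ ≤ ∑ i, ∑ j, (f i j + M) :=
        single_le_sum (f := fun i => ∑ j, (f i j + M))
          (fun i _ => sum_nonneg fun j _ => hnonneg i j) (mem_univ a)
    _ = ∑ i, ∑ j, f i j + Fintype.card ι ^ 2 * M := by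
        simp only [sum_add_distrib, sum_const, card_univ, nsmul_eq_mul]
        ring

lemma Fin.mul_le_last_sub_zero {m : ℕ} {δ : ℝ} (x : Fin (m + 1) → ℝ)
    (h : ∀ k : Fin m, δ ≤ x k.succ - x k.castSucc) : m * δ ≤ x (Fin.last m) - x 0 := by
  induction m with
  | zero => simp
  | succ m ih =>
    have hinit := ih (x ∘ Fin.castSucc) fun k => h k.castSucc
    have hlast := h (Fin.last m)
    simp only [Function.comp_apply, Fin.castSucc_zero, Fin.succ_last] at hinit hlast
    push_cast
    linarith

lemma Real.exists_rpow_le_mul_rpow_add {α γ c : ℝ} (h : α < γ) (hγ : γ ≤ 0) (hc : 0 < c) :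
    ∃ M, ∀ r, 0 < r → r ^ γ ≤ c * r ^ α + M := by
  set r₀ := c ^ (γ - α)⁻¹
  have hr₀ : 0 < r₀ := Real.rpow_pos_of_pos hc _
  refine ⟨r₀ ^ γ, fun r hr => ?_⟩
  rcases le_total r r₀ with hle | hge
  · have hsmall : r ^ (γ - α) ≤ c := by
      rw [← Real.rpow_inv_rpow hc.le (sub_pos.2 h).ne']
      exact Real.rpow_le_rpow hr.le hle (sub_pos.2 h).le
    have hsplit : r ^ γ = r ^ (γ - α) * r ^ α := by
      rw [← Real.rpow_add hr, sub_add_cancel]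
    have := mul_le_mul_of_nonneg_right hsmall (Real.rpow_pos_of_pos hr α).le
    linarith [Real.rpow_pos_of_pos hr₀ γ]
  · linarith [Real.rpow_le_rpow_of_nonpos hr₀ hge hγ, Real.rpow_pos_of_pos hr α,
      mul_pos hc (Real.rpow_pos_of_pos hr α)]

lemma exists_pairPotential_ge {α γ : ℝ} (h : α < γ) (hγ : γ < 0) :
    ∃ M, 0 ≤ M ∧ ∀ r, 0 < r → r ^ α / (-2 * α) - M ≤ pairPotential α γ r := by
  have hα : α < 0 := h.trans hγ
  obtain ⟨M, hM⟩ := Real.exists_rpow_le_mul_rpow_add h hγ.le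
    (div_pos_of_neg_of_neg hγ (by linarith : 2 * α < 0))
  refine ⟨max 0 (M / -γ), le_max_left _ _, fun r hr => ?_⟩
  have hγterm : (γ / (2 * α) * r ^ α + M) / γ ≤ r ^ γ / γ :=
    div_le_div_of_nonpos_of_le hγ.le (hM r hr)
  have hsplit : (γ / (2 * α) * r ^ α + M) / γ = r ^ α / (2 * α) - M / -γ := by
    field_simp [hγ.ne, hα.ne]
    ring
  have hhalf : r ^ α / (-2 * α) = r ^ α / (2 * α) - r ^ α / α := by
    field_simp
    ring
  unfold pairPotential
  linarith [le_max_right 0 (M / -γ)]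

lemma pairPotential_le_of_one_le {α γ r : ℝ} (hα : α < 0) (hγ : γ < 0) (hr : 1 ≤ r) :
    pairPotential α γ r ≤ -α⁻¹ := by
  have hr0 : 0 < r := zero_lt_one.trans_le hr
  have hγterm : r ^ γ / γ ≤ 0 := div_nonpos_of_nonneg_of_nonpos (Real.rpow_nonneg hr0.le _) hγ.le
  have hαterm : r ^ α / α ≥ 1 / α :=
    div_le_div_of_nonpos_of_le hα.le (Real.rpow_le_one_of_one_le_of_nonpos hr hα.le)
  unfold pairPotential
  rw [one_div] at hαterm
  linarith

lemma En1_natCast_le (n : ℕ) {α γ : ℝ} (hα : α < 0) (hγ : γ < 0) :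
    En1 n α γ (fun j => (j : ℝ)) ≤ -α⁻¹ * n ^ 2 := by
  have hterm : ∀ i j : Fin n, (if i = j then 0 else pairPotential α γ |(i : ℝ) - j|) ≤ -α⁻¹ := by
    intro i j
    split_ifs with hij
    · exact (neg_pos.2 (inv_lt_zero.2 hα)).le
    · refine pairPotential_le_of_one_le hα hγ ?_
      have : (i : ℤ) ≠ j := fun h => hij (Fin.ext (by exact_mod_cast h))
      exact_mod_cast Int.one_le_abs (sub_ne_zero.2 this)
  calc En1 n α γ (fun j => (j : ℝ)) ≤ ∑ _i : Fin n, ∑ _j : Fin n, -α⁻¹ :=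
        sum_le_sum fun i _ => sum_le_sum fun j _ => hterm i j
    _ = -α⁻¹ * n ^ 2 := by simp only [sum_const, card_univ, Fintype.card_fin, nsmul_eq_mul]; ring

lemma pairPotential_add_le_En1 {n : ℕ} {α γ M : ℝ} (hM0 : 0 ≤ M)
    (hM : ∀ r, 0 < r → -M ≤ pairPotential α γ r) {x : Fin n → ℝ} (hx : Function.Injective x)
    {a b : Fin n} (hab : a ≠ b) :
    pairPotential α γ |x a - x b| + M ≤ En1 n α γ x + n ^ 2 * M := by
  have hf : ∀ i j : Fin n, -M ≤ if i = j then 0 else pairPotential α γ |x i - x j| := by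
    intro i j
    split_ifs with hij
    · linarith
    · exact hM _ (abs_pos.2 (sub_ne_zero.2 (hx.ne hij)))
  simpa [En1_eq_sum_pairPotential, hab] using apply_add_le_sum_sum_add hf a b

lemma exists_pos_mul_rpow_le_dist_of_isMinimizer {α γ : ℝ} (h : α < γ) (hγ : γ < 0) :
    ∃ c, 0 < c ∧ ∀ (n : ℕ) (x : Fin n → ℝ), Function.Injective x →
      (∀ y : Fin n → ℝ, Function.Injective y → En1 n α γ x ≤ En1 n α γ y) →
      ∀ a b, a ≠ b → c * (n : ℝ) ^ (2 / α) ≤ |x a - x b| := by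
  have hα : α < 0 := h.trans hγ
  obtain ⟨M, hM0, hM⟩ := exists_pairPotential_ge h hγ
  have hK : 0 < 2 * (1 - α * M) := by nlinarith
  refine ⟨(2 * (1 - α * M)) ^ α⁻¹, Real.rpow_pos_of_pos hK _, fun n x hx hmin a b hab => ?_⟩
  have hn : (0 : ℝ) < n := Nat.cast_pos.2 a.pos
  have hd : 0 < |x a - x b| := abs_pos.2 (sub_ne_zero.2 (hx.ne hab))
  have hupper : En1 n α γ x ≤ -α⁻¹ * n ^ 2 :=
    (hmin _ (Nat.cast_injective.comp Fin.val_injective)).trans (En1_natCast_le n hα hγ)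
  have hpotential_ge : ∀ r, 0 < r → -M ≤ pairPotential α γ r := fun r hr => by
    linarith [hM r hr, div_nonneg (Real.rpow_pos_of_pos hr α).le (by linarith : 0 ≤ -2 * α)]
  have hpair := pairPotential_add_le_En1 hM0 hpotential_ge hx hab
  have hdα : |x a - x b| ^ α ≤ 2 * (1 - α * M) * n ^ 2 := by
    have hscaled : |x a - x b| ^ α / (-2 * α) ≤ (-α⁻¹ + M) * n ^ 2 := by
      linarith [hM _ hd]
    rw [div_le_iff₀ (by linarith)] at hscaled
    calc |x a - x b| ^ α ≤ (-α⁻¹ + M) * n ^ 2 * (-2 * α) := hscaled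
      _ = 2 * (1 - α * M) * n ^ 2 := by field_simp [hα.ne]; ring
  calc (2 * (1 - α * M)) ^ α⁻¹ * (n : ℝ) ^ (2 / α)
      = (2 * (1 - α * M) * n ^ 2) ^ α⁻¹ := by
        rw [Real.mul_rpow hK.le (by positivity), ← Real.rpow_natCast_mul hn.le, div_eq_mul_inv]
        norm_num
    _ ≤ |x a - x b| := (Real.rpow_inv_le_iff_of_neg (by positivity) hd hα).2 hdα

theorem stmt_14 (α γ : ℝ) (h : α < γ) (hγ : γ < 0) :
    ∃ C : ℝ, 0 < C ∧ ∃ N : ℕ, ∀ n : ℕ, N ≤ n → ∀ hn : 2 ≤ n,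
      ∀ x : Fin n → ℝ, Monotone x → Function.Injective x →
        (∀ y : Fin n → ℝ, Function.Injective y → En1 n α γ x ≤ En1 n α γ y) →
        x ⟨n - 1, by omega⟩ - x ⟨0, by omega⟩ ≥ C * (n : ℝ) ^ (1 + 2 / α) := by
  obtain ⟨c, hc, hsep⟩ := exists_pos_mul_rpow_le_dist_of_isMinimizer h hγ
  refine ⟨c / 2, half_pos hc, 0, fun n _ hn x hmono hinj hmin => ?_⟩
  obtain ⟨m, rfl⟩ : ∃ m, n = m + 1 := ⟨n - 1, by omega⟩
  have hgap : ∀ k : Fin m, c * ((m + 1 : ℕ) : ℝ) ^ (2 / α) ≤ x k.succ - x k.castSucc := by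
    intro k
    have hle : x k.castSucc ≤ x k.succ := hmono k.castSucc_lt_succ.le
    simpa [abs_of_nonneg (sub_nonneg.2 hle)] using
      hsep _ x hinj hmin k.succ k.castSucc k.castSucc_lt_succ.ne'
  have hdiam := Fin.mul_le_last_sub_zero x hgap
  have hm : (1 : ℝ) ≤ m := by exact_mod_cast (by omega : 1 ≤ m)
  have hpow : 0 ≤ c * ((m + 1 : ℕ) : ℝ) ^ (2 / α) := by positivity
  rw [ge_iff_le, Real.rpow_add (by positivity), Real.rpow_one]
  calc c / 2 * (((m + 1 : ℕ) : ℝ) * ((m + 1 : ℕ) : ℝ) ^ (2 / α))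
      ≤ m * (c * ((m + 1 : ℕ) : ℝ) ^ (2 / α)) := by push_cast at hpow ⊢; nlinarith
    _ ≤ x (Fin.last m) - x 0 := hdiam
end
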